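/- In an LM-system R, for any two distinct rules l1 → r1 and l2 → r2 (renamed apart), the right-hand side r1 is not unifiable with the left-hand side l2. -/

import Mathlib

/-! Basic first-order terms, positions, substitutions and rewriting. -/

inductive Term (F : Type) : Type
  | var : Nat → Term F
  | app : F → List (Term F) → Term F

namespace Term

def subst {F : Type} (σ : Nat → Term F) : Term F → Term F
  | var n => σ n
  | app f ts => app f (ts.attach.map fun ⟨t, _⟩ => t.subst σ)

def root {F : Type} : Term F → Option F
  | var _ => none
  | app f _ => some f

def label {F : Type} : Term F → F ⊕ Nat
  | var n => Sum.inr n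
  | app f _ => Sum.inl f

def IsVar {F : Type} : Term F → Prop
  | var _ => True
  | app _ _ => False

def varsL {F : Type} : Term F → List Nat
  | var n => [n]
  | app _ ts => (ts.attach.map fun ⟨t, _⟩ => t.varsL).flatten

end Term

abbrev Rule (F : Type) := Term F × Term F
abbrev TRS (F : Type) := Set (Rule F)

/-- `SubtermAt t p u` : the subterm of `t` at position `p` is `u`. -/
inductive SubtermAt {F : Type} : Term F → List Nat → Term F → Prop
  | here (t : Term F) : SubtermAt t [] t
  | there {f : F} {ts : List (Term F)} {i : Nat} {u : Term F} {p : List Nat} {v : Term F} :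
      ts[i]? = some u → SubtermAt u p v → SubtermAt (Term.app f ts) (i :: p) v

/-- `ReplaceAt t p v t'` : replacing the subterm of `t` at position `p` by `v` yields `t'`. -/
inductive ReplaceAt {F : Type} : Term F → List Nat → Term F → Term F → Prop
  | here (t u : Term F) : ReplaceAt t [] u u
  | there {f : F} {ts : List (Term F)} {i : Nat} {u : Term F} {p : List Nat} {v w : Term F} :
      ts[i]? = some u → ReplaceAt u p v w →
      ReplaceAt (Term.app f ts) (i :: p) v (Term.app f (ts.set i w))

variable {F : Type}

/-- One rewrite step using the given rule (at some position, with some substitution). -/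
def RuleStep (ρ : Rule F) (s t : Term F) : Prop :=
  ∃ (σ : Nat → Term F) (p : List Nat),
    SubtermAt s p (ρ.1.subst σ) ∧ ReplaceAt s p (ρ.2.subst σ) t

def OneStep (R : TRS F) (s t : Term F) : Prop := ∃ ρ ∈ R, RuleStep ρ s t

/-- A rewrite step at the root position. -/
def RootStep (R : TRS F) (s t : Term F) : Prop :=
  ∃ ρ ∈ R, ∃ σ : Nat → Term F, s = ρ.1.subst σ ∧ t = ρ.2.subst σ

def StarRW (R : TRS F) : Term F → Term F → Prop := Relation.ReflTransGen (OneStep R)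
def Plus (R : TRS F) : Term F → Term F → Prop := Relation.TransGen (OneStep R)
/-- Convertibility (the congruence / equational theory generated by `R`). -/
def Conv (R : TRS F) : Term F → Term F → Prop := Relation.EqvGen (OneStep R)
def Joinable (R : TRS F) (s t : Term F) : Prop := ∃ u, StarRW R s u ∧ StarRW R t u
def NormalForm (R : TRS F) (t : Term F) : Prop := ∀ u, ¬ OneStep R t u
/-- `t` is the `R`-normal form of `s`. -/
def NFof (R : TRS F) (s t : Term F) : Prop := StarRW R s t ∧ NormalForm R t
def Terminating (R : TRS F) : Prop := WellFounded (fun a b : Term F => OneStep R b a)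
def Confluent (R : TRS F) : Prop := ∀ s t u, StarRW R s t → StarRW R s u → Joinable R t u
def Convergent (R : TRS F) : Prop := Confluent R ∧ Terminating R

/-- every proper subterm is irreducible -/
def EpsIrreducible (R : TRS F) (t : Term F) : Prop :=
  ∀ p u, SubtermAt t p u → p ≠ [] → NormalForm R u

def InnermostRedex (R : TRS F) (t : Term F) : Prop :=
  EpsIrreducible R t ∧ ¬ NormalForm R t

/-- Forward-closed, via the one-step-to-normal-form characterization. -/
def FCclosed (R : TRS F) : Prop :=
  ∀ t, InnermostRedex R t → ∀ u, NFof R t u → OneStep R t u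

def Unifies (σ : Nat → Term F) (s t : Term F) : Prop := s.subst σ = t.subst σ

def IsMGU (σ : Nat → Term F) (s t : Term F) : Prop :=
  Unifies σ s t ∧ ∀ τ, Unifies τ s t → ∃ δ, ∀ x, τ x = (σ x).subst δ

def IsRenaming (ρ : Nat → Term F) : Prop :=
  ∃ f : Nat → Nat, Function.Injective f ∧ ∀ n, ρ n = Term.var (f n)

/-- Redundancy criterion for an oriented equation `e` whose right-hand side is
reachable from its left-hand side: some proper subterm of the lhs is reducible. -/
def Redundant (R : TRS F) (e : Rule F) : Prop :=
  ∃ p u, p ≠ ([] : List Nat) ∧ SubtermAt e.1 p u ∧ ¬ NormalForm R u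

/-- `R₁ ↝ R₂`: forward overlaps of rules of `R₂` (renamed apart) into
right-hand sides of rules of `R₁`, at non-variable positions, via an mgu. -/
def FStep (R₁ R₂ : TRS F) : TRS F :=
  { e | ∃ (l₁ r₁ l₂ r₂ : Term F) (ρ : Nat → Term F) (p : List Nat) (u : Term F)
          (σ : Nat → Term F) (r₁' : Term F),
      (l₁, r₁) ∈ R₁ ∧ (l₂, r₂) ∈ R₂ ∧ IsRenaming ρ ∧
      SubtermAt r₁ p u ∧ ¬ u.IsVar ∧ IsMGU σ u (l₂.subst ρ) ∧
      ReplaceAt r₁ p (r₂.subst ρ) r₁' ∧ e = (l₁.subst σ, r₁'.subst σ) }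

def FCiter (R : TRS F) : Nat → TRS F
  | 0 => R
  | k + 1 => FCiter R k ∪ { e | e ∈ FStep (FCiter R k) R ∧ ¬ Redundant (FCiter R k) e }

def FCinf (R : TRS F) : TRS F := ⋃ k, FCiter R k

/-- Forward-closed, via the forward-closure construction: `FC(R) = R`. -/
def ForwardClosedFC (R : TRS F) : Prop := FCinf R = R

/-- `RHS(R)`: `R` together with the conclusions of right-hand-side critical
pair inferences (second rule renamed apart). -/
def RHSset (R : TRS F) : TRS F :=
  R ∪ { e | ∃ (s t u₀ v₀ : Term F) (ρ σ : Nat → Term F), (s, t) ∈ R ∧ (u₀, v₀) ∈ R ∧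
        IsRenaming ρ ∧ IsMGU σ t (v₀.subst ρ) ∧
        s.subst σ ≠ (u₀.subst ρ).subst σ ∧ e = (s.subst σ, (u₀.subst ρ).subst σ) }

/-- the (unordered) pairs of root symbols of two equations coincide -/
def RootPairSimilar (e₁ e₂ : Rule F) : Prop :=
  (e₁.1.root = e₂.1.root ∧ e₁.2.root = e₂.2.root) ∨
  (e₁.1.root = e₂.2.root ∧ e₁.2.root = e₂.1.root)

def QuasiDet (E : TRS F) : Prop :=
  (∀ e ∈ E, ¬ e.1.IsVar ∧ ¬ e.2.IsVar) ∧
  (∀ e ∈ E, e.1.root ≠ e.2.root) ∧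
  (∀ e₁ ∈ E, ∀ e₂ ∈ E, e₁ ≠ e₂ → ¬ RootPairSimilar e₁ e₂)

def HasRootPairRepetition (E : TRS F) : Prop :=
  ∃ e₁ ∈ E, ∃ e₂ ∈ E, e₁ ≠ e₂ ∧ RootPairSimilar e₁ e₂

def VarPreserving (R : TRS F) : Prop :=
  ∀ e ∈ R, ∀ n, n ∈ Term.varsL e.1 ↔ n ∈ Term.varsL e.2

def RightReduced (R : TRS F) : Prop := ∀ e ∈ R, NormalForm R e.2

def AlmostLeftReduced (R : TRS F) : Prop :=
  ¬ ∃ (l₁ r₁ l₂ r₂ : Term F) (p : List Nat) (u : Term F) (σ : Nat → Term F),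
      (l₁, r₁) ∈ R ∧ (l₂, r₂) ∈ R ∧ p ≠ [] ∧ SubtermAt l₁ p u ∧ u = l₂.subst σ

def NonSubtermCollapsing (R : TRS F) : Prop :=
  ¬ ∃ (t u : Term F) (p : List Nat), p ≠ [] ∧ SubtermAt u p t ∧ Conv R t u

structure LMSystem (R : TRS F) : Prop where
  convergent : Convergent R
  almostLeftReduced : AlmostLeftReduced R
  rightReduced : RightReduced R
  nonCollapsing : NonSubtermCollapsing R
  forwardClosed : FCclosed R
  quasiDet : QuasiDet (RHSset R)

/-- the symbol (function symbol or variable) of a term at a position, if defined -/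
def labelAt {F : Type} : List Nat → Term F → Option (F ⊕ Nat)
  | [], t => some t.label
  | i :: p, Term.app _ ts => (ts[i]?).bind (labelAt p)
  | _ :: _, Term.var _ => none

/-- outermost distinguishing position -/
def ODP (s t : Term F) (p : List Nat) : Prop :=
  (labelAt p s ≠ none ∨ labelAt p t ≠ none) ∧
  labelAt p s ≠ labelAt p t ∧
  ∀ q, q <+: p → q ≠ p → labelAt q s = labelAt q t

/-! Let `N` be the normal form of the common instance `r₁σ = l₂τ`; it is also the normal form
of `l₁σ` and of `r₂τ`. By quasi-determinism the roots of `l₁`, `r₁ = l₂` and `r₂` are pairwise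
distinct. Forward closure puts each of these three roots either at the root of `N` or among the
left-hand roots of the rules of which `N` is a right-hand side instance. Quasi-determinism of
`RHS(R)` leaves at most one such rule, so the three distinct roots do not fit. -/

namespace Term

@[simp] theorem subst_var (σ : ℕ → Term F) (n : ℕ) : (var n).subst σ = σ n := by
  simp [subst]

@[simp] theorem subst_app (σ : ℕ → Term F) (f : F) (ts : List (Term F)) :
    (app f ts).subst σ = app f (ts.map (subst σ)) := by
  simp [subst]

@[simp] theorem varsL_var (n : ℕ) : (var n : Term F).varsL = [n] := by
  simp [varsL]

@[simp] theorem varsL_app (f : F) (ts : List (Term F)) :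
    (app f ts).varsL = (ts.map varsL).flatten := by
  simp [varsL]

@[elab_as_elim]
theorem induction_on {P : Term F → Prop} (var : ∀ n, P (var n))
    (app : ∀ f ts, (∀ t ∈ ts, P t) → P (app f ts)) : ∀ t, P t
  | .var n => var n
  | .app f ts => app f ts fun t _ => induction_on var app t

theorem subst_congr {σ τ : ℕ → Term F} (t : Term F) (h : ∀ n ∈ t.varsL, σ n = τ n) :
    t.subst σ = t.subst τ := by
  induction t using induction_on with
  | var n => simpa using h n
  | app f ts ih =>
    simp only [varsL_app, List.mem_flatten, List.mem_map] at h
    rw [subst_app, subst_app, List.map_inj_left.mpr]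
    exact fun t ht => ih t ht fun n hn => h n ⟨_, ⟨t, ht, rfl⟩, hn⟩

theorem subst_subst (σ τ : ℕ → Term F) (t : Term F) :
    (t.subst σ).subst τ = t.subst fun n => (σ n).subst τ := by
  induction t using induction_on with
  | var n => simp
  | app f ts ih => simpa using List.map_congr_left ih

@[simp] theorem subst_id (t : Term F) : t.subst var = t := by
  induction t using induction_on with
  | var n => simp
  | app f ts ih => simpa using List.map_congr_left ih

theorem root_subst {t : Term F} (h : ¬ t.IsVar) (σ : ℕ → Term F) :
    (t.subst σ).root = t.root := by
  cases t with
  | var n => exact absurd trivial h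
  | app f ts => simp [root]

theorem not_isVar_subst {t : Term F} (h : ¬ t.IsVar) (σ : ℕ → Term F) :
    ¬ (t.subst σ).IsVar := by
  cases t with
  | var n => exact absurd trivial h
  | app f ts => simp [IsVar]

theorem mem_varsL_subst {σ : ℕ → Term F} {n : ℕ} {t : Term F} (h : n ∈ (t.subst σ).varsL) :
    ∃ m ∈ t.varsL, n ∈ (σ m).varsL := by
  induction t using induction_on with
  | var k => exact ⟨k, by simp, by simpa using h⟩
  | app f ts ih =>
    simp only [subst_app, varsL_app, List.map_map, List.mem_flatten, List.mem_map,
      Function.comp_apply] at h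
    obtain ⟨_, ⟨t, ht, rfl⟩, hn⟩ := h
    obtain ⟨m, hm, hnm⟩ := ih t ht hn
    exact ⟨m, by simpa using ⟨t, ht, hm⟩, hnm⟩

def size : Term F → ℕ
  | var _ => 1
  | app _ ts => (ts.map size).sum + 1

@[simp] theorem size_var (n : ℕ) : (var n : Term F).size = 1 := by
  simp [size]

@[simp] theorem size_app (f : F) (ts : List (Term F)) :
    (app f ts).size = (ts.map size).sum + 1 := by
  simp [size]

theorem size_pos (t : Term F) : 0 < t.size := by
  cases t <;> simp

theorem size_lt_size_app {t : Term F} {ts : List (Term F)} (f : F) (h : t ∈ ts) :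
    t.size < (app f ts).size := by
  simpa [Nat.lt_succ_iff] using List.le_sum_of_mem (List.mem_map_of_mem (f := size) h)

theorem size_le_size_subst (σ : ℕ → Term F) {x : ℕ} {t : Term F} (hx : x ∈ t.varsL) :
    (σ x).size ≤ (t.subst σ).size := by
  induction t using induction_on with
  | var n => simp_all
  | app f ts ih =>
    simp only [varsL_app, List.mem_flatten, List.mem_map] at hx
    obtain ⟨_, ⟨t, ht, rfl⟩, hx⟩ := hx
    rw [subst_app]
    exact (ih t ht hx).trans (size_lt_size_app f (List.mem_map_of_mem ht)).le

theorem subst_var_ne_subst {σ : ℕ → Term F} {x : ℕ} {t : Term F} (hx : x ∈ t.varsL)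
    (ht : t ≠ var x) : σ x ≠ t.subst σ := by
  cases t with
  | var n => simp_all
  | app f ts =>
    simp only [varsL_app, List.mem_flatten, List.mem_map] at hx
    obtain ⟨_, ⟨t, ht, rfl⟩, hx⟩ := hx
    intro h
    have := (size_le_size_subst σ hx).trans_lt (size_lt_size_app f (List.mem_map_of_mem ht))
    rw [← subst_app, ← h] at this
    exact this.false

end Term

theorem SubtermAt.eq_of_nil {t u : Term F} (h : SubtermAt t [] u) : u = t := by
  cases h; rfl

theorem ReplaceAt.eq_of_nil {t v t' : Term F} (h : ReplaceAt t [] v t') : t' = v := by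
  cases h; rfl

theorem SubtermAt.trans {t u v : Term F} {p q : List ℕ}
    (h₁ : SubtermAt t p u) (h₂ : SubtermAt u q v) : SubtermAt t (p ++ q) v := by
  induction h₁ with
  | here => exact h₂
  | there hget _ ih => exact .there hget (ih h₂)

theorem SubtermAt.exists_replaceAt {t u : Term F} {p : List ℕ} (h : SubtermAt t p u)
    (v : Term F) : ∃ t', ReplaceAt t p v t' := by
  induction h with
  | here t => exact ⟨v, .here t v⟩
  | there hget _ ih =>
    obtain ⟨w, hw⟩ := ih
    exact ⟨_, .there hget hw⟩

theorem ReplaceAt.trans {t u v w t' : Term F} {p q : List ℕ}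
    (h₁ : SubtermAt t p u) (h₂ : ReplaceAt u q v w) (h₃ : ReplaceAt t p w t') :
    ReplaceAt t (p ++ q) v t' := by
  induction h₁ generalizing t' with
  | here => cases h₃; exact h₂
  | there hget _ ih =>
    cases h₃ with
    | there hget' h₃ =>
      cases hget.symm.trans hget'
      exact .there hget (ih h₂ h₃)

section Rewriting

variable {R : TRS F}

theorem OneStep.subst_rule {l r : Term F} (h : (l, r) ∈ R) (σ : ℕ → Term F) :
    OneStep R (l.subst σ) (r.subst σ) :=
  ⟨(l, r), h, σ, [], .here _, .here _ _⟩

theorem OneStep.at {t u u' t' : Term F} {p : List ℕ} (hu : SubtermAt t p u)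
    (ht' : ReplaceAt t p u' t') (h : OneStep R u u') : OneStep R t t' := by
  obtain ⟨ρ, hρ, σ, q, hq, hq'⟩ := h
  exact ⟨ρ, hρ, σ, p ++ q, hu.trans hq, .trans hu hq' ht'⟩

theorem NormalForm.subtermAt {t u : Term F} {p : List ℕ} (ht : NormalForm R t)
    (hu : SubtermAt t p u) : NormalForm R u := fun u' hu' =>
  have ⟨t', ht'⟩ := hu.exists_replaceAt u'
  ht t' (.at hu ht' hu')

theorem NormalForm.eq_of_starRW {t u : Term F} (ht : NormalForm R t) (h : StarRW R t u) :
    u = t := by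
  rcases h.cases_head with h | ⟨v, hv, _⟩
  · exact h.symm
  · exact absurd hv (ht v)

theorem exists_nfOf (hT : Terminating R) (t : Term F) : ∃ u, NFof R t u := by
  induction t using hT.induction with
  | _ t ih =>
    by_cases ht : NormalForm R t
    · exact ⟨t, .refl, ht⟩
    · obtain ⟨u, hu⟩ := not_forall_not.mp ht
      obtain ⟨v, hv, hvn⟩ := ih u hu
      exact ⟨v, .head hu hv, hvn⟩

theorem NFof.of_starRW (hC : Confluent R) {t u v : Term F} (hu : NFof R t u)
    (hv : StarRW R t v) : NFof R v u := by
  obtain ⟨w, hvw, huw⟩ := hC t v u hv hu.1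
  rw [hu.2.eq_of_starRW huw] at hvw
  exact ⟨hvw, hu.2⟩

theorem OneStep.app_mid {a b : Term F} (h : OneStep R a b) (f : F) (pre post : List (Term F)) :
    OneStep R (.app f (pre ++ a :: post)) (.app f (pre ++ b :: post)) := by
  have hget : (pre ++ a :: post)[pre.length]? = some a := by simp
  have hset : (pre ++ a :: post).set pre.length b = pre ++ b :: post := by simp
  exact .at (.there hget (.here a)) (hset ▸ .there hget (.here a b)) h

theorem StarRW.app_of_forall₂ (f : F) {ts us : List (Term F)}
    (h : List.Forall₂ (StarRW R) ts us) : StarRW R (.app f ts) (.app f us) := by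
  suffices ∀ pre, StarRW R (.app f (pre ++ ts)) (.app f (pre ++ us)) by simpa using this []
  induction h with
  | nil => exact fun _ => .refl
  | @cons a b ts us hab _ ih =>
    intro pre
    have hmid : StarRW R (.app f (pre ++ a :: ts)) (.app f (pre ++ b :: ts)) :=
      Relation.ReflTransGen.lift (fun a => Term.app f (pre ++ a :: ts))
        (fun _ _ h => OneStep.app_mid h f pre ts) a b hab
    have hrest := ih (pre ++ [b])
    simp only [List.append_assoc, List.cons_append, List.nil_append] at hrest
    exact hmid.trans hrest

theorem exists_starRW_app_normal_args (hT : Terminating R) (f : F) (ts : List (Term F)) :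
    ∃ us, StarRW R (.app f ts) (.app f us) ∧ ∀ u ∈ us, NormalForm R u := by
  choose nf hnf using exists_nfOf hT
  refine ⟨ts.map nf, .app_of_forall₂ f ?_, by simp [fun t => (hnf t).2]⟩
  exact List.forall₂_map_right_iff.mpr (List.forall₂_same.mpr fun t _ => (hnf t).1)

theorem epsIrreducible_app {f : F} {us : List (Term F)} (h : ∀ u ∈ us, NormalForm R u) :
    EpsIrreducible R (.app f us) := by
  rintro _ v (_ | ⟨hget, hv⟩) hp
  · exact absurd rfl hp
  · exact (h _ (List.mem_of_getElem? hget)).subtermAt hv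

def lhsRootsOfRhsInstance (R : TRS F) (N : Term F) : Set (Option F) :=
  {f | ∃ l r δ, (l, r) ∈ R ∧ l.root = f ∧ N = r.subst δ}

/-- Once the arguments of `s` are normalized, forward closure makes the rest of the
normalization a single step, necessarily at the root. -/
theorem NFof.root_mem (hC : Confluent R) (hT : Terminating R) (hFC : FCclosed R)
    (hlhs : ∀ e ∈ R, ¬ e.1.IsVar) {s N : Term F} (hN : NFof R s N) (hs : ¬ s.IsVar) :
    s.root ∈ lhsRootsOfRhsInstance R N ∪ {N.root} := by
  obtain ⟨f, ts, rfl⟩ : ∃ f ts, s = .app f ts := by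
    cases s <;> simp_all [Term.IsVar]
  obtain ⟨us, hus, hnormal⟩ := exists_starRW_app_normal_args hT f ts
  have hN' := hN.of_starRW hC hus
  by_cases hnf : NormalForm R (.app f us)
  · right
    rw [hnf.eq_of_starRW hN'.1]
    rfl
  have hinner : InnermostRedex R (.app f us) := ⟨epsIrreducible_app hnormal, hnf⟩
  obtain ⟨ρ, hρ, σ, p, hp, hp'⟩ := hFC _ hinner N hN'
  cases p with
  | nil =>
    refine .inl ⟨ρ.1, ρ.2, σ, hρ, ?_, hp'.eq_of_nil⟩
    rw [← Term.root_subst (hlhs ρ hρ) σ, hp.eq_of_nil]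
    rfl
  | cons i q => exact (hinner.1 _ _ hp (List.cons_ne_nil i q) _ (.subst_rule hρ σ)).elim

end Rewriting

section Unification

def UnifiesAll (θ : ℕ → Term F) (E : List (Rule F)) : Prop := ∀ e ∈ E, Unifies θ e.1 e.2

def IsMGUAll (ψ : ℕ → Term F) (E : List (Rule F)) : Prop :=
  UnifiesAll ψ E ∧ ∀ τ, UnifiesAll τ E → ∃ δ, ∀ x, τ x = (ψ x).subst δ

@[simp] theorem unifiesAll_nil (θ : ℕ → Term F) : UnifiesAll θ [] := by
  simp [UnifiesAll]

@[simp] theorem unifiesAll_cons {θ : ℕ → Term F} {e : Rule F} {E : List (Rule F)} :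
    UnifiesAll θ (e :: E) ↔ Unifies θ e.1 e.2 ∧ UnifiesAll θ E :=
  List.forall_mem_cons

@[simp] theorem unifiesAll_append {θ : ℕ → Term F} {E E' : List (Rule F)} :
    UnifiesAll θ (E ++ E') ↔ UnifiesAll θ E ∧ UnifiesAll θ E' :=
  List.forall_mem_append

theorem unifies_comm {θ : ℕ → Term F} {s t : Term F} : Unifies θ s t ↔ Unifies θ t s :=
  eq_comm

theorem unifies_app_app {θ : ℕ → Term F} {f g : F} {ts us : List (Term F)} :
    Unifies θ (.app f ts) (.app g us) ↔
      f = g ∧ ts.length = us.length ∧ UnifiesAll θ (ts.zip us) := by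
  simp only [Unifies, Term.subst_app, Term.app.injEq, UnifiesAll, Prod.forall]
  rw [← List.forall₂_eq_eq_eq, List.forall₂_map_left_iff, List.forall₂_map_right_iff,
    List.forall₂_iff_zip]

theorem isMGUAll_nil : IsMGUAll Term.var ([] : List (Rule F)) :=
  ⟨unifiesAll_nil _, fun τ _ => ⟨τ, by simp⟩⟩

theorem IsMGUAll.of_iff {ψ : ℕ → Term F} {E E' : List (Rule F)}
    (h : ∀ θ, UnifiesAll θ E ↔ UnifiesAll θ E') (hψ : IsMGUAll ψ E') : IsMGUAll ψ E :=
  ⟨(h ψ).2 hψ.1, fun τ hτ => hψ.2 τ ((h τ).1 hτ)⟩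

def substAll (σ : ℕ → Term F) (E : List (Rule F)) : List (Rule F) :=
  E.map (Prod.map (Term.subst σ) (Term.subst σ))

theorem subst_update_subst {θ : ℕ → Term F} {x : ℕ} {t : Term F} (hx : θ x = t.subst θ)
    (u : Term F) : (u.subst (Function.update Term.var x t)).subst θ = u.subst θ := by
  rw [Term.subst_subst]
  congr 1
  funext n
  by_cases hn : n = x
  · subst hn
    simp [hx]
  · simp [hn]

theorem subst_update_of_not_mem {x : ℕ} {t : Term F} (hx : x ∉ t.varsL) :
    t.subst (Function.update Term.var x t) = t := by
  conv_rhs => rw [← Term.subst_id t]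
  exact Term.subst_congr t fun n hn => Function.update_of_ne (ne_of_mem_of_not_mem hn hx) _ _

theorem unifiesAll_map_subst_update {θ : ℕ → Term F} {x : ℕ} {t : Term F}
    (hx : θ x = t.subst θ) (E : List (Rule F)) :
    UnifiesAll θ (substAll (Function.update Term.var x t) E) ↔ UnifiesAll θ E := by
  simp only [UnifiesAll, substAll, List.forall_mem_map, Prod.map_fst, Prod.map_snd, Unifies,
    subst_update_subst hx]

theorem IsMGUAll.eliminate {ψ : ℕ → Term F} {x : ℕ} {t : Term F} {E : List (Rule F)}
    (hx : x ∉ t.varsL)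
    (hψ : IsMGUAll ψ (substAll (Function.update Term.var x t) E)) :
    IsMGUAll (fun n => (Function.update Term.var x t n).subst ψ) ((.var x, t) :: E) := by
  refine ⟨unifiesAll_cons.mpr ⟨?_, ?_⟩, fun τ hτ => ?_⟩
  · simp [Unifies, ← Term.subst_subst, subst_update_of_not_mem hx]
  · intro e he
    have := hψ.1 _ (List.mem_map_of_mem he)
    simpa only [Unifies, Prod.map, Term.subst_subst] using this
  · obtain ⟨hτx, hτE⟩ := unifiesAll_cons.mp hτ
    rw [Unifies, Term.subst_var] at hτx
    obtain ⟨δ, hδ⟩ := hψ.2 τ ((unifiesAll_map_subst_update hτx E).mpr hτE)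
    refine ⟨δ, fun n => ?_⟩
    calc τ n = (Function.update Term.var x t n).subst τ := by
          simpa using (subst_update_subst hτx (.var n)).symm
      _ = _ := by rw [Term.subst_subst, funext hδ]

def varsAll (E : List (Rule F)) : Finset ℕ :=
  (E.flatMap fun e => e.1.varsL ++ e.2.varsL).toFinset

def sizeAll (E : List (Rule F)) : ℕ :=
  (E.map fun e => e.1.size + e.2.size).sum

/-- Robinson's termination measure: eliminating a variable shrinks the first component,
every other step does not increase it and shrinks the second one. -/
def unifMeasure (E : List (Rule F)) : ℕ ×ₗ ℕ :=
  toLex ((varsAll E).card, sizeAll E)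

theorem unifMeasure_lt_of_ssubset {E E' : List (Rule F)} (h : varsAll E ⊂ varsAll E') :
    unifMeasure E < unifMeasure E' :=
  Prod.Lex.toLex_lt_toLex.mpr (.inl (Finset.card_lt_card h))

theorem unifMeasure_lt_of_subset {E E' : List (Rule F)} (hv : varsAll E ⊆ varsAll E')
    (hs : sizeAll E < sizeAll E') : unifMeasure E < unifMeasure E' := by
  rcases (Finset.card_le_card hv).lt_or_eq with h | h
  · exact Prod.Lex.toLex_lt_toLex.mpr (.inl h)
  · exact Prod.Lex.toLex_lt_toLex.mpr (.inr ⟨h, hs⟩)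

theorem unifMeasure_lt_cons (e : Rule F) (E : List (Rule F)) :
    unifMeasure E < unifMeasure (e :: E) := by
  refine unifMeasure_lt_of_subset (fun n => by simp_all [varsAll]) ?_
  have := e.1.size_pos
  simp only [sizeAll, List.map_cons, List.sum_cons]
  omega

theorem unifMeasure_swap (s t : Term F) (E : List (Rule F)) :
    unifMeasure ((s, t) :: E) = unifMeasure ((t, s) :: E) := by
  have hv : varsAll ((s, t) :: E) = varsAll ((t, s) :: E) := by
    ext n
    simp only [varsAll, List.flatMap_cons, List.mem_toFinset, List.mem_append]
    tauto
  simp only [unifMeasure, hv, sizeAll, List.map_cons, add_comm s.size]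

theorem sizeAll_zip_le (ts us : List (Term F)) :
    sizeAll (ts.zip us) ≤ (ts.map Term.size).sum + (us.map Term.size).sum := by
  induction ts generalizing us with
  | nil => simp [sizeAll]
  | cons t ts ih =>
    cases us with
    | nil => simp [sizeAll]
    | cons u us =>
      have := ih us
      simp only [sizeAll, List.zip_cons_cons, List.map_cons, List.sum_cons] at this ⊢
      omega

theorem unifMeasure_lt_decompose (f g : F) (ts us : List (Term F)) (E : List (Rule F)) :
    unifMeasure (ts.zip us ++ E) < unifMeasure ((.app f ts, .app g us) :: E) := by
  refine unifMeasure_lt_of_subset ?_ ?_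
  · intro n hn
    simp only [varsAll, List.flatMap_append, List.mem_toFinset, List.mem_append,
      List.mem_flatMap] at hn
    simp only [varsAll, List.flatMap_cons, List.mem_toFinset, List.mem_append,
      Term.varsL_app, List.mem_flatten, List.mem_map, List.mem_flatMap]
    rcases hn with ⟨⟨a, b⟩, hab, hn⟩ | hn
    · have ⟨ha, hb⟩ := List.of_mem_zip hab
      rcases hn with hn | hn
      · exact .inl (.inl ⟨_, ⟨a, ha, rfl⟩, hn⟩)
      · exact .inl (.inr ⟨_, ⟨b, hb, rfl⟩, hn⟩)
    · exact .inr hn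
  · have := sizeAll_zip_le ts us
    simp only [sizeAll, List.map_append, List.sum_append, List.map_cons, List.sum_cons,
      Term.size_app] at this ⊢
    omega

theorem mem_varsL_subst_update {x n : ℕ} {t u : Term F} (hx : x ∉ t.varsL)
    (hn : n ∈ (u.subst (Function.update Term.var x t)).varsL) :
    n ≠ x ∧ (n ∈ u.varsL ∨ n ∈ t.varsL) := by
  obtain ⟨m, hm, hnm⟩ := Term.mem_varsL_subst hn
  by_cases hmx : m = x
  · subst hmx
    rw [Function.update_self] at hnm
    exact ⟨ne_of_mem_of_not_mem hnm hx, .inr hnm⟩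
  · rw [Function.update_of_ne hmx, Term.varsL_var, List.mem_singleton] at hnm
    exact hnm ▸ ⟨hmx, .inl hm⟩

theorem unifMeasure_lt_eliminate {x : ℕ} {t : Term F} (hx : x ∉ t.varsL)
    (E : List (Rule F)) :
    unifMeasure (substAll (Function.update Term.var x t) E) <
      unifMeasure ((.var x, t) :: E) := by
  refine unifMeasure_lt_of_ssubset (Finset.ssubset_iff_of_subset ?_ |>.mpr ⟨x, ?_, ?_⟩)
  · intro n hn
    simp only [varsAll, substAll, List.flatMap_map, List.mem_toFinset, List.mem_flatMap,
      Prod.map_fst, Prod.map_snd, List.mem_append] at hn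
    simp only [varsAll, List.flatMap_cons, List.mem_toFinset, List.mem_append, List.mem_flatMap]
    obtain ⟨e, he, hn | hn⟩ := hn
    · obtain ⟨-, hn | hn⟩ := mem_varsL_subst_update hx hn
      exacts [.inr ⟨e, he, .inl hn⟩, .inl (.inr hn)]
    · obtain ⟨-, hn | hn⟩ := mem_varsL_subst_update hx hn
      exacts [.inr ⟨e, he, .inr hn⟩, .inl (.inr hn)]
  · simp [varsAll]
  · simp only [varsAll, substAll, List.flatMap_map, List.mem_toFinset, List.mem_flatMap,
      Prod.map_fst, Prod.map_snd, List.mem_append, not_exists, not_and, not_or]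
    exact fun e _ => ⟨fun h => (mem_varsL_subst_update hx h).1 rfl,
      fun h => (mem_varsL_subst_update hx h).1 rfl⟩

theorem exists_isMGUAll_cons_var {x : ℕ} {t : Term F} {E : List (Rule F)}
    (ih : ∀ E' : List (Rule F), unifMeasure E' < unifMeasure ((.var x, t) :: E) →
      (∃ θ, UnifiesAll θ E') → ∃ ψ, IsMGUAll ψ E')
    {θ : ℕ → Term F} (hθ : UnifiesAll θ ((.var x, t) :: E)) :
    ∃ ψ, IsMGUAll ψ ((.var x, t) :: E) := by
  obtain ⟨hθx, hθE⟩ := unifiesAll_cons.mp hθ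
  rw [Unifies, Term.subst_var] at hθx
  by_cases htx : t = .var x
  · subst htx
    obtain ⟨ψ, hψ⟩ := ih E (unifMeasure_lt_cons _ E) ⟨θ, hθE⟩
    exact ⟨ψ, hψ.of_iff fun τ => by simp [Unifies]⟩
  by_cases hx : x ∈ t.varsL
  · exact absurd hθx (Term.subst_var_ne_subst hx htx)
  obtain ⟨ψ, hψ⟩ := ih _ (unifMeasure_lt_eliminate hx E)
    ⟨θ, (unifiesAll_map_subst_update hθx E).mpr hθE⟩
  exact ⟨_, hψ.eliminate hx⟩

theorem exists_isMGUAll (E : List (Rule F)) (hE : ∃ θ, UnifiesAll θ E) :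
    ∃ ψ, IsMGUAll ψ E := by
  induction E using (InvImage.wf unifMeasure wellFounded_lt).induction with
  | _ E ih =>
  obtain ⟨θ, hθ⟩ := hE
  match E, ih, hθ with
  | [], _, _ => exact ⟨_, isMGUAll_nil⟩
  | (.var x, t) :: E, ih, hθ => exact exists_isMGUAll_cons_var ih hθ
  | (.app f ts, .var x) :: E, ih, hθ =>
    have hswap (τ : ℕ → Term F) :
        UnifiesAll τ ((.app f ts, .var x) :: E) ↔ UnifiesAll τ ((.var x, .app f ts) :: E) := by
      simp only [unifiesAll_cons, unifies_comm]
    obtain ⟨ψ, hψ⟩ := exists_isMGUAll_cons_var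
      (fun E' h => ih E' (by rwa [InvImage, unifMeasure_swap])) ((hswap θ).mp hθ)
    exact ⟨ψ, hψ.of_iff hswap⟩
  | (.app f ts, .app g us) :: E, ih, hθ =>
    obtain ⟨⟨rfl, hlen, hθts⟩, hθE⟩ := unifiesAll_cons.mp hθ |>.imp_left unifies_app_app.mp
    obtain ⟨ψ, hψ⟩ := ih _ (unifMeasure_lt_decompose f f ts us E)
      ⟨θ, unifiesAll_append.mpr ⟨hθts, hθE⟩⟩
    exact ⟨ψ, hψ.of_iff fun τ => by simp [unifies_app_app, hlen]⟩

theorem exists_isMGU {s t : Term F} (h : ∃ θ, Unifies θ s t) : ∃ ψ, IsMGU ψ s t := by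
  obtain ⟨ψ, hψ⟩ := exists_isMGUAll [(s, t)] (by simpa using h)
  exact ⟨ψ, by simpa using hψ.1, fun τ hτ => hψ.2 τ (by simpa using hτ)⟩

end Unification

theorem Set.Subsingleton.eq_or_eq_or_eq_of_mem_union {α : Type*} {s t : Set α}
    (hs : s.Subsingleton) (ht : t.Subsingleton) {a b c : α} (ha : a ∈ s ∪ t) (hb : b ∈ s ∪ t)
    (hc : c ∈ s ∪ t) : a = b ∨ a = c ∨ b = c := by
  rcases ha with ha | ha <;> rcases hb with hb | hb <;> rcases hc with hc | hc <;>
    first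
    | exact .inl (hs ha hb) | exact .inl (ht ha hb)
    | exact .inr (.inl (hs ha hc)) | exact .inr (.inl (ht ha hc))
    | exact .inr (.inr (hs hb hc)) | exact .inr (.inr (ht hb hc))

theorem exists_renaming_unifies {s t : Term F} {δ δ' : ℕ → Term F}
    (h : s.subst δ = t.subst δ') : ∃ ρ, IsRenaming ρ ∧ ∃ θ, Unifies θ s (t.subst ρ) := by
  set M := s.varsL.sum + 1
  refine ⟨fun n => .var (n + M), ⟨(· + M), add_left_injective M, fun _ => rfl⟩,
    fun n => if n < M then δ n else δ' (n - M), ?_⟩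
  have hs : s.subst (fun n => if n < M then δ n else δ' (n - M)) = s.subst δ :=
    Term.subst_congr s fun n hn => if_pos (Nat.lt_succ_of_le (List.le_sum_of_mem hn))
  rw [Unifies, hs, h, Term.subst_subst]
  exact Term.subst_congr t fun n _ => by simp

section LMSystem

variable {R : TRS F}

theorem exists_mem_rhsSet_roots {lX rX lY rY : Term F} (hX : (lX, rX) ∈ R)
    (hY : (lY, rY) ∈ R) (hlX : ¬ lX.IsVar) (hlY : ¬ lY.IsVar) (hroots : lX.root ≠ lY.root)
    {δX δY : ℕ → Term F} (h : rX.subst δX = rY.subst δY) :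
    ∃ e ∈ RHSset R, e.1.root = lX.root ∧ e.2.root = lY.root := by
  obtain ⟨ρ, hρ, hunif⟩ := exists_renaming_unifies h
  obtain ⟨ψ, hψ⟩ := exists_isMGU hunif
  have h₁ : (lX.subst ψ).root = lX.root := Term.root_subst hlX ψ
  have h₂ : ((lY.subst ρ).subst ψ).root = lY.root := by
    rw [Term.subst_subst]
    exact Term.root_subst hlY _
  refine ⟨_, .inr ⟨lX, rX, lY, rY, ρ, ψ, hX, hY, hρ, hψ, ?_, rfl⟩, h₁, h₂⟩
  exact fun heq => hroots (h₁ ▸ h₂ ▸ congrArg Term.root heq)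

/-- Were the rules distinct, their root pairs would be similar: directly if their left-hand
roots agree, and otherwise those of the two critical pairs between their right-hand sides. -/
theorem eq_of_rhs_subst_eq (hq : QuasiDet (RHSset R)) {lX rX lY rY : Term F}
    (hX : (lX, rX) ∈ R) (hY : (lY, rY) ∈ R) {δX δY : ℕ → Term F}
    (h : rX.subst δX = rY.subst δY) : (lX, rX) = (lY, rY) := by
  by_contra hne
  obtain ⟨hlX, hrX⟩ := hq.1 _ (.inl hX)
  obtain ⟨hlY, hrY⟩ := hq.1 _ (.inl hY)
  have hr : rX.root = rY.root := by
    rw [← Term.root_subst hrX δX, ← Term.root_subst hrY δY, h]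
  by_cases hl : lX.root = lY.root
  · exact hq.2.2 _ (.inl hX) _ (.inl hY) hne (.inl ⟨hl, hr⟩)
  obtain ⟨e, he, he₁, he₂⟩ := exists_mem_rhsSet_roots hX hY hlX hlY hl h
  obtain ⟨e', he', he'₁, he'₂⟩ := exists_mem_rhsSet_roots hY hX hlY hlX (Ne.symm hl) h.symm
  have hee' : e ≠ e' := by
    rintro rfl
    exact hl (he₁.symm.trans he'₁)
  exact hq.2.2 e he e' he' hee' (.inr ⟨he₁.trans he'₂.symm, he₂.trans he'₁.symm⟩)

theorem lhsRootsOfRhsInstance_subsingleton (hq : QuasiDet (RHSset R)) (N : Term F) :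
    (lhsRootsOfRhsInstance R N).Subsingleton := by
  rintro _ ⟨l, r, δ, hlr, rfl, hN⟩ _ ⟨l', r', δ', hlr', rfl, hN'⟩
  cases eq_of_rhs_subst_eq hq hlr hlr' (hN.symm.trans hN')
  rfl

end LMSystem

/-- for distinct rules of an LM-system (renamed apart), the rhs of the
first is not unifiable with the lhs of the second (common-instance formulation). -/
theorem rhs_lhs_not_unifiable {F : Type} (R : TRS F) (hlm : LMSystem R)
    (e1 e2 : Rule F) (h1 : e1 ∈ R) (h2 : e2 ∈ R) (hne : e1 ≠ e2) :
    ¬ ∃ (σ τ : Nat → Term F), e1.2.subst σ = e2.1.subst τ := by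
  rintro ⟨σ, τ, hστ⟩
  obtain ⟨hC, hT⟩ := hlm.convergent
  have hq := hlm.quasiDet
  obtain ⟨hl₁, hr₁⟩ := hq.1 e1 (.inl h1)
  obtain ⟨hl₂, hr₂⟩ := hq.1 e2 (.inl h2)
  have root_mem {s N : Term F} (hN : NFof R s N) (hs : ¬ s.IsVar) :=
    hN.root_mem hC hT hlm.forwardClosed (fun e he => (hq.1 e (.inl he)).1) hs
  obtain ⟨N, hN⟩ := exists_nfOf hT (e1.2.subst σ)
  have hNl₁ : NFof R (e1.1.subst σ) N := ⟨.head (.subst_rule h1 σ) hN.1, hN.2⟩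
  have hNr₂ : NFof R (e2.2.subst τ) N := hN.of_starRW hC (.single (hστ ▸ .subst_rule h2 τ))
  have hroot : e1.2.root = e2.1.root := by
    rw [← Term.root_subst hr₁ σ, ← Term.root_subst hl₂ τ, hστ]
  rcases Set.Subsingleton.eq_or_eq_or_eq_of_mem_union
    (lhsRootsOfRhsInstance_subsingleton hq N) Set.subsingleton_singleton
    (Term.root_subst hl₁ σ ▸ root_mem hNl₁ (Term.not_isVar_subst hl₁ σ))
    (Term.root_subst hr₁ σ ▸ root_mem hN (Term.not_isVar_subst hr₁ σ))
    (Term.root_subst hr₂ τ ▸ root_mem hNr₂ (Term.not_isVar_subst hr₂ τ)) with h | h | h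
  · exact hq.2.1 e1 (.inl h1) h
  · exact hq.2.2 e1 (.inl h1) e2 (.inl h2) hne (.inr ⟨h, hroot⟩)
  · exact hq.2.1 e2 (.inl h2) (hroot ▸ h)
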